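/- Let G be the presented group ⟨a, b, c | r₁, r₂, r₃⟩ where r₁ = a·c·b⁻¹·a⁻¹·c⁻¹·a·c·b·c⁻¹, r₂ = a·a·b⁻¹·c·b·a·b·c⁻¹, r₃ = a·b·a⁻¹·b⁻¹·c·c. Then G is not isomorphic to the cyclic group of order 2. -/

import Mathlib

/-!
Sending `a ↦ 1`, `b ↦ (0 1 2)`, `c ↦ (0 1)` kills all three relators, so the group maps onto
`S₃`. The images of `b` and `c` do not commute, hence neither do `b` and `c`, and the group is
not abelian, unlike `ℤ/2`.
-/

namespace Stmt2

/-- The generator `a` of the free group on three generators. -/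
def a : FreeGroup (Fin 3) := FreeGroup.of 0
/-- The generator `b` of the free group on three generators. -/
def b : FreeGroup (Fin 3) := FreeGroup.of 1
/-- The generator `c` of the free group on three generators. -/
def c : FreeGroup (Fin 3) := FreeGroup.of 2

/-- The relator `r₁ = a·c·b⁻¹·a⁻¹·c⁻¹·a·c·b·c⁻¹`. -/
def r₁ : FreeGroup (Fin 3) := a * c * b⁻¹ * a⁻¹ * c⁻¹ * a * c * b * c⁻¹
/-- The relator `r₂ = a·a·b⁻¹·c·b·a·b·c⁻¹`. -/
def r₂ : FreeGroup (Fin 3) := a * a * b⁻¹ * c * b * a * b * c⁻¹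
/-- The relator `r₃ = a·b·a⁻¹·b⁻¹·c·c`. -/
def r₃ : FreeGroup (Fin 3) := a * b * a⁻¹ * b⁻¹ * c * c

def generatorPerm : Fin 3 → Equiv.Perm (Fin 3) := ![1, finRotate 3, Equiv.swap 0 1]

lemma lift_generatorPerm_relator :
    ∀ r ∈ ({r₁, r₂, r₃} : Set (FreeGroup (Fin 3))), FreeGroup.lift generatorPerm r = 1 := by
  rintro r (rfl | rfl | rfl) <;>
    simp only [r₁, r₂, r₃, a, b, c, map_mul, map_inv, FreeGroup.lift_apply_of] <;>
    decide

def toPerm : PresentedGroup ({r₁, r₂, r₃} : Set (FreeGroup (Fin 3))) →* Equiv.Perm (Fin 3) :=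
  PresentedGroup.toGroup lift_generatorPerm_relator

lemma not_commute_of_one_of_two :
    ¬ Commute (PresentedGroup.of 1 : PresentedGroup ({r₁, r₂, r₃} : Set (FreeGroup (Fin 3))))
      (PresentedGroup.of 2) := by
  intro h
  have h_perm : Commute (finRotate 3) (Equiv.swap (0 : Fin 3) 1) := by
    simpa [toPerm, generatorPerm] using h.map toPerm
  exact absurd h_perm.eq (by decide)

/-- The presented group `⟨a, b, c | r₁, r₂, r₃⟩` is not isomorphic to the
cyclic group of order 2. -/
theorem presented_group_not_iso_zmod_two :
    ¬ Nonempty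
        (PresentedGroup ({r₁, r₂, r₃} : Set (FreeGroup (Fin 3))) ≃*
          Multiplicative (ZMod 2)) := by
  rintro ⟨e⟩
  apply not_commute_of_one_of_two
  simpa using (Commute.all (e (PresentedGroup.of 1)) (e (PresentedGroup.of 2))).map e.symm

end Stmt2
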